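/- The mean-square error of the estimator ĝ^e = (wc/(1+w²c))·(ζ/√(cM) − ĝ), where ĝ is the MMSE estimate of g from (r, q, ζ), equals E[|ĝ^e − g^e|²] = 1/((1+w²c)M) + (wc/(1+w²c))² · σ_g²σ_n²/(σ_g² q†q + σ_n²), which is proportional to 1/M. -/

import Mathlib

open MeasureTheory ProbabilityTheory Filter

noncomputable instance (M : ℕ) : MeasureSpace (EuclideanSpace ℂ (Fin M)) :=
  ⟨Measure.map (WithLp.toLp 2) (volume : Measure (Fin M → ℂ))⟩
instance (M : ℕ) : BorelSpace (EuclideanSpace ℂ (Fin M)) :=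
  inferInstance
instance (M : ℕ) : PolishSpace (EuclideanSpace ℂ (Fin M)) :=
  inferInstance

/-- The circularly-symmetric complex Gaussian distribution `CN(μ, v)` on `ℂ`,
given by the density `z ↦ (π v)⁻¹ exp(-|z-μ|²/v)` w.r.t. Lebesgue measure. -/
noncomputable def cn (μ : ℂ) (v : ℝ) : Measure ℂ :=
  volume.withDensity fun z =>
    ENNReal.ofReal ((Real.pi * v)⁻¹ * Real.exp (-(‖z - μ‖) ^ 2 / v))

/-- The circularly-symmetric complex Gaussian distribution `CN(μ, v • I_M)` on `ℂ^M`. -/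
noncomputable def cnVec (M : ℕ) (μ : EuclideanSpace ℂ (Fin M)) (v : ℝ) :
    Measure (EuclideanSpace ℂ (Fin M)) :=
  volume.withDensity fun x =>
    ENNReal.ofReal (((Real.pi * v) ^ M)⁻¹ * Real.exp (-‖x - μ‖ ^ 2 / v))

/-!
The estimation error is `ĝ^e − g^e = a e₁ − e₂` with `a = wc/(1+w²c)`. Since `e₁` and `e₂` are
independent and `e₁` is centred, the cross term `E[conj(a e₁) e₂]` vanishes and the mean-square
error is `a² E|e₁|² + E|e₂|²`. The moments of `CN(0, v)` are read off from its description as the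
law of `X + iY` with `X`, `Y` independent `N(0, v/2)`.
-/

open scoped ENNReal NNReal ComplexConjugate

theorem MeasurableEquiv.withDensity_map {α β : Type*} [MeasurableSpace α] [MeasurableSpace β]
    (e : α ≃ᵐ β) (μ : Measure α) (f : β → ℝ≥0∞) :
    (μ.map e).withDensity f = (μ.withDensity (f ∘ e)).map e := by
  ext s hs
  rw [withDensity_apply _ hs, e.restrict_map, lintegral_map_equiv,
    Measure.map_apply e.measurable hs, withDensity_apply _ (e.measurable hs)]
  rfl

lemma cn_zero_eq_map_gaussianReal_prod {v : ℝ} (hv : 0 < v) :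
    cn 0 v = ((gaussianReal 0 (v / 2).toNNReal).prod (gaussianReal 0 (v / 2).toNNReal)).map
      Complex.measurableEquivRealProd.symm := by
  have hσ : (v / 2).toNNReal ≠ 0 := by simpa using hv
  rw [gaussianReal_of_var_ne_zero 0 hσ,
    prod_withDensity (measurable_gaussianPDF _ _) (measurable_gaussianPDF _ _),
    ← Measure.volume_eq_prod, cn,
    ← Complex.volume_preserving_equiv_real_prod.symm.map_eq, MeasurableEquiv.withDensity_map]
  congr 2
  funext p
  simp only [Function.comp_apply, gaussianPDF, Complex.measurableEquivRealProd_symm_apply]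
  rw [← ENNReal.ofReal_mul (gaussianPDFReal_nonneg _ _ _)]
  congr 1
  simp only [gaussianPDFReal_def, sub_zero, Real.coe_toNNReal _ (by positivity : 0 ≤ v / 2)]
  rw [Complex.sq_norm, Complex.normSq_mk, show 2 * (v / 2) = v by ring, mul_mul_mul_comm,
    ← Real.exp_add, ← mul_inv, Real.mul_self_sqrt (by positivity)]
  congr 2 <;> ring

lemma integral_sq_gaussianReal_zero (σ : ℝ≥0) : ∫ x, x ^ 2 ∂gaussianReal 0 σ = σ := by
  rw [← variance_of_integral_eq_zero aemeasurable_id' integral_id_gaussianReal,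
    variance_fun_id_gaussianReal]

lemma integrable_sq_gaussianReal (μ : ℝ) (σ : ℝ≥0) :
    Integrable (fun x : ℝ => x ^ 2) (gaussianReal μ σ) :=
  (memLp_id_gaussianReal 2).integrable_sq

section ComplexGaussian

variable {v : ℝ}

lemma isProbabilityMeasure_cn (hv : 0 < v) : IsProbabilityMeasure (cn 0 v) := by
  rw [cn_zero_eq_map_gaussianReal_prod hv]
  exact Measure.isProbabilityMeasure_map (by fun_prop)

lemma memLp_id_cn (hv : 0 < v) : MemLp id 2 (cn 0 v) := by
  rw [memLp_two_iff_integrable_sq_norm aestronglyMeasurable_id,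
    cn_zero_eq_map_gaussianReal_prod hv, integrable_map_equiv]
  have h := integrable_sq_gaussianReal 0 (v / 2).toNNReal
  refine ((h.comp_fst _).add (h.comp_snd _)).congr (ae_of_all _ fun p => ?_)
  simp only [Function.comp_apply, id, Pi.add_apply, Complex.measurableEquivRealProd_symm_apply,
    Complex.sq_norm, Complex.normSq_mk]
  ring

lemma integral_id_cn (hv : 0 < v) : ∫ z, z ∂cn 0 v = 0 := by
  have := isProbabilityMeasure_cn hv
  have hint : Integrable (fun z : ℂ => z) (cn 0 v) := (memLp_id_cn hv).integrable one_le_two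
  apply Complex.ext
  · rw [← Complex.reCLM_apply, ← Complex.reCLM.integral_comp_comm hint,
      cn_zero_eq_map_gaussianReal_prod hv, integral_map_equiv]
    simpa using integral_fun_fst (μ := gaussianReal 0 (v / 2).toNNReal)
      (ν := gaussianReal 0 (v / 2).toNNReal) (fun x : ℝ => x)
  · rw [← Complex.imCLM_apply, ← Complex.imCLM.integral_comp_comm hint,
      cn_zero_eq_map_gaussianReal_prod hv, integral_map_equiv]
    simpa using integral_fun_snd (μ := gaussianReal 0 (v / 2).toNNReal)
      (ν := gaussianReal 0 (v / 2).toNNReal) (fun x : ℝ => x)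

lemma integral_norm_sq_cn (hv : 0 < v) : ∫ z, ‖z‖ ^ 2 ∂cn 0 v = v := by
  have h := integrable_sq_gaussianReal 0 (v / 2).toNNReal
  rw [cn_zero_eq_map_gaussianReal_prod hv, integral_map_equiv]
  simp only [Complex.measurableEquivRealProd_symm_apply, Complex.sq_norm, Complex.normSq_mk, ← sq]
  rw [integral_add (h.comp_fst _) (h.comp_snd _), integral_fun_fst (fun x => x ^ 2),
    integral_fun_snd (fun x => x ^ 2), integral_sq_gaussianReal_zero]
  simp only [probReal_univ, one_smul, Real.coe_toNNReal _ (by positivity : 0 ≤ v / 2)]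
  ring

end ComplexGaussian

lemma integral_norm_sub_sq_of_indepFun {Ω 𝕜 : Type*} [RCLike 𝕜] {mΩ : MeasurableSpace Ω}
    {μ : Measure Ω} [IsProbabilityMeasure μ] {X Y : Ω → 𝕜} (hX : MemLp X 2 μ) (hY : MemLp Y 2 μ)
    (hXY : X ⟂ᵢ[μ] Y) (hX0 : μ[X] = 0) :
    ∫ ω, ‖X ω - Y ω‖ ^ 2 ∂μ = ∫ ω, ‖X ω‖ ^ 2 ∂μ + ∫ ω, ‖Y ω‖ ^ 2 ∂μ := by
  have hconjX : MemLp (fun ω => conj (X ω)) 2 μ := hX.star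
  have hconjXY : (fun ω => conj (X ω)) ⟂ᵢ[μ] Y :=
    hXY.comp RCLike.continuous_conj.measurable measurable_id
  have hcross_int : Integrable (fun ω => conj (X ω) * Y ω) μ :=
    hconjXY.integrable_mul (hconjX.integrable one_le_two) (hY.integrable one_le_two)
  have hcross : ∫ ω, conj (X ω) * Y ω ∂μ = 0 := by
    rw [hconjXY.integral_fun_mul_eq_mul_integral hconjX.1 hY.1, integral_conj, hX0,
      map_zero, zero_mul]
  have hexpand (ω : Ω) : ‖X ω - Y ω‖ ^ 2
      = ‖X ω‖ ^ 2 - 2 * RCLike.re (conj (X ω) * Y ω) + ‖Y ω‖ ^ 2 := by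
    simpa [mul_comm] using norm_sub_sq (𝕜 := 𝕜) (X ω) (Y ω)
  have hX2 : Integrable (fun ω => ‖X ω‖ ^ 2) μ := hX.integrable_norm_pow'
  have hY2 : Integrable (fun ω => ‖Y ω‖ ^ 2) μ := hY.integrable_norm_pow'
  have hre2 : Integrable (fun ω => 2 * RCLike.re (conj (X ω) * Y ω)) μ :=
    hcross_int.re.const_mul 2
  have hdiff : Integrable (fun ω => ‖X ω‖ ^ 2 - 2 * RCLike.re (conj (X ω) * Y ω)) μ :=
    hX2.sub hre2
  simp_rw [hexpand]
  rw [integral_add hdiff hY2, integral_sub hX2 hre2, integral_const_mul, integral_re hcross_int,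
    hcross, map_zero, mul_zero, sub_zero]

lemma hasLaw_of_map_eq_cn {Ω : Type*} {mΩ : MeasurableSpace Ω} {P : Measure Ω} {X : Ω → ℂ}
    {v : ℝ} (hv : 0 < v) (hX : P.map X = cn 0 v) : HasLaw X (cn 0 v) P :=
  ⟨.of_map_ne_zero (hX ▸ (isProbabilityMeasure_cn hv).ne_zero), hX⟩

namespace ProbabilityTheory.HasLaw

variable {Ω : Type*} {mΩ : MeasurableSpace Ω} {P : Measure Ω} {X : Ω → ℂ} {v : ℝ}

lemma memLp_two_of_cn (hX : HasLaw X (cn 0 v) P) (hv : 0 < v) : MemLp X 2 P :=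
  (memLp_map_measure_iff aestronglyMeasurable_id hX.aemeasurable).1 (hX.map_eq ▸ memLp_id_cn hv)

lemma integral_eq_zero_of_cn (hX : HasLaw X (cn 0 v) P) (hv : 0 < v) : P[X] = 0 :=
  hX.integral_eq.trans (integral_id_cn hv)

lemma integral_norm_sq_of_cn (hX : HasLaw X (cn 0 v) P) (hv : 0 < v) :
    ∫ ω, ‖X ω‖ ^ 2 ∂P = v :=
  (hX.integral_comp (f := fun z => ‖z‖ ^ 2) (by fun_prop)).trans (integral_norm_sq_cn hv)

end ProbabilityTheory.HasLaw

theorem mse_of_eve_gain_estimator_general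
    (M Nd : ℕ) (hM : 1 ≤ M) (c w vg vn : ℝ)
    (hc : 0 < c) (hvg : 0 < vg) (hvn : 0 < vn)
    (Ω : Type) [MeasureSpace Ω] [IsProbabilityMeasure (ℙ : Measure Ω)]
    (q : EuclideanSpace ℂ (Fin Nd))
    (ζ : Ω → ℝ) (g ghat ge e₁ e₂ : Ω → ℂ)
    (he₁ : e₁ = fun ω => g ω - ghat ω)
    (he₁law : Measure.map e₁ ℙ = cn 0 (vg * vn / (vg * ‖q‖ ^ 2 + vn)))
    (hge : ge = fun ω =>
      ((w * c / (1 + w ^ 2 * c) : ℝ) : ℂ)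
          * (((ζ ω / Real.sqrt (c * M) : ℝ) : ℂ) - g ω) + e₂ ω)
    (he₂law : Measure.map e₂ ℙ = cn 0 (1 / ((1 + w ^ 2 * c) * M)))
    (hindep : IndepFun e₁ e₂ ℙ)
    (gehat : Ω → ℂ)
    (hgehat : gehat = fun ω =>
      ((w * c / (1 + w ^ 2 * c) : ℝ) : ℂ)
          * (((ζ ω / Real.sqrt (c * M) : ℝ) : ℂ) - ghat ω)) :
    ∫ ω, (‖gehat ω - ge ω‖) ^ 2 ∂ℙ
      = 1 / ((1 + w ^ 2 * c) * M)
        + (w * c / (1 + w ^ 2 * c)) ^ 2 * (vg * vn / (vg * ‖q‖ ^ 2 + vn)) := by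
  set a := w * c / (1 + w ^ 2 * c)
  set v₁ := vg * vn / (vg * ‖q‖ ^ 2 + vn)
  set v₂ := 1 / ((1 + w ^ 2 * c) * M)
  have hv₁ : 0 < v₁ := by positivity
  have hv₂ : 0 < v₂ := by
    have : (0 : ℝ) < M := by exact_mod_cast hM
    positivity
  have h₁ := hasLaw_of_map_eq_cn hv₁ he₁law
  have h₂ := hasLaw_of_map_eq_cn hv₂ he₂law
  have herr (ω : Ω) : gehat ω - ge ω = (a : ℂ) * e₁ ω - e₂ ω := by
    rw [hgehat, hge, he₁]
    ring
  have hmean : ∫ ω, (a : ℂ) * e₁ ω ∂ℙ = 0 := by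
    rw [integral_const_mul, h₁.integral_eq_zero_of_cn hv₁, mul_zero]
  simp_rw [herr]
  rw [integral_norm_sub_sq_of_indepFun ((h₁.memLp_two_of_cn hv₁).const_mul _)
    (h₂.memLp_two_of_cn hv₂) (hindep.comp (measurable_const_mul _) measurable_id) hmean]
  simp_rw [norm_mul, mul_pow, integral_const_mul, h₁.integral_norm_sq_of_cn hv₁,
    h₂.integral_norm_sq_of_cn hv₂, Complex.norm_real, Real.norm_eq_abs, sq_abs]
  ring

/-- MSE of the eavesdropper-gain estimator. With
`ĝ^e = (wc/(1+w²c))(ζ/√(cM) − ĝ)`, where the MMSE error `e₁ = g − ĝ` has law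
`CN(0, σ_g²σ_n²/(σ_g² q†q + σ_n²))`, and
`g^e = (wc/(1+w²c))(ζ/√(cM) − g) + e₂` with `e₂ ~ CN(0, 1/((1+w²c)M))`
independent of `e₁`, the mean-square error is
`E[|ĝ^e − g^e|²] = 1/((1+w²c)M) + (wc/(1+w²c))² σ_g²σ_n²/(σ_g² q†q + σ_n²)`. -/
theorem mse_of_eve_gain_estimator
    (M Nd : ℕ) (hM : 1 ≤ M) (c w vg vn : ℝ)
    (hc : 0 < c) (hw : 0 ≤ w) (hvg : 0 < vg) (hvn : 0 < vn)
    (Ω : Type) [MeasureSpace Ω] [IsProbabilityMeasure (ℙ : Measure Ω)]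
    (q : EuclideanSpace ℂ (Fin Nd)) (hq : q ≠ 0)
    (ζ : Ω → ℝ) (g ghat ge e₁ e₂ : Ω → ℂ)
    (he₁ : e₁ = fun ω => g ω - ghat ω)
    (he₁law : Measure.map e₁ ℙ = cn 0 (vg * vn / (vg * ‖q‖ ^ 2 + vn)))
    (hge : ge = fun ω =>
      ((w * c / (1 + w ^ 2 * c) : ℝ) : ℂ)
          * (((ζ ω / Real.sqrt (c * M) : ℝ) : ℂ) - g ω) + e₂ ω)
    (he₂law : Measure.map e₂ ℙ = cn 0 (1 / ((1 + w ^ 2 * c) * M)))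
    (hindep : IndepFun e₁ e₂ ℙ)
    (gehat : Ω → ℂ)
    (hgehat : gehat = fun ω =>
      ((w * c / (1 + w ^ 2 * c) : ℝ) : ℂ)
          * (((ζ ω / Real.sqrt (c * M) : ℝ) : ℂ) - ghat ω)) :
    ∫ ω, (‖gehat ω - ge ω‖) ^ 2 ∂ℙ
      = 1 / ((1 + w ^ 2 * c) * M)
        + (w * c / (1 + w ^ 2 * c)) ^ 2 * (vg * vn / (vg * ‖q‖ ^ 2 + vn)) :=
  mse_of_eve_gain_estimator_general M Nd hM c w vg vn hc hvg hvn Ω q ζ g ghat ge e₁ e₂ he₁ he₁law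
    hge he₂law hindep gehat hgehat
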